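/- arXiv:2202.12012 — 7 statements merged into one kernel-verified Lean document; each statement's English description precedes it below -/
import Mathlib

section
/- Let κ be a regular cardinal and C a small category with fewer than κ morphisms. A presheaf P : Cᵒᵖ → Set is a κ-presentable (κ-compact) object of the presheaf category if and only if P(c) has cardinality less than κ for every object c of C. -/
/-!
Both directions go through the colimit-closure description of `κ`-presentable presheaves.
A pointwise `κ`-small presheaf is the colimit of representables over its category of elements,
which has fewer than `κ` arrows; representables are `κ`-presentable, and `κ`-presentable objects
are closed under colimits indexed by categories with fewer than `κ` arrows. Conversely,
representables form a strong generator of `κ`-presentable objects, so every `κ`-presentable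
presheaf is built from representables by such colimits; these preserve pointwise `κ`-smallness,
because evaluation preserves colimits and a colimit in `Type` is a quotient of the disjoint union
of the diagram.
-/

open CategoryTheory CategoryTheory.Limits

universe w v u

/-- A category `J` is `κ`-filtered if every diagram in `J` indexed by a category
with fewer than `κ` morphisms admits a cocone. -/
def IsCardFiltered (κ : Cardinal.{w}) (J : Type w) [SmallCategory J] : Prop :=
  ∀ (K : Type w) [SmallCategory K], Cardinal.mk (Σ a b : K, a ⟶ b) < κ →
    ∀ F : K ⥤ J, Nonempty (Cocone F)

/-- An object `X` is `κ`-compact (κ-presentable) if `Hom(X, −)` preserves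
`κ`-filtered colimits. -/
def IsKappaCompact (κ : Cardinal.{w}) {E : Type u} [Category.{v} E] (X : E) : Prop :=
  ∀ (J : Type w) [SmallCategory J], IsCardFiltered κ J →
    ∀ (F : J ⥤ E) (c : Cocone F), Nonempty (IsColimit c) →
      Nonempty (IsColimit ((coyoneda.obj (Opposite.op X)).mapCocone c))

open Opposite

namespace CategoryTheory

lemma hasCardinalLT_arrow_iff_mk_sigma_lt (K : Type w) [SmallCategory K] (κ : Cardinal.{w}) :
    HasCardinalLT (Arrow K) κ ↔ Cardinal.mk (Σ a b : K, a ⟶ b) < κ := by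
  rw [hasCardinalLT_iff_of_equiv (Arrow.equivSigma K), hasCardinalLT_iff_cardinal_mk_lt]

section

variable (κ : Cardinal.{w}) [Fact κ.IsRegular]

lemma Types.hasCardinalLT_of_isColimit {J : Type*} [Category J] {F : J ⥤ Type u}
    {c : Cocone F} (hc : IsColimit c) (hJ : HasCardinalLT J κ)
    (hF : ∀ j, HasCardinalLT (F.obj j) κ) : HasCardinalLT c.pt κ :=
  (hasCardinalLT_sigma _ κ hJ hF).of_surjective (fun x ↦ c.ι.app x.1 x.2) fun y ↦ by
    obtain ⟨j, x, rfl⟩ := Types.jointly_surjective_of_isColimit hc y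
    exact ⟨⟨j, x⟩, rfl⟩

lemma hasCardinalLT_arrow_elements {C : Type*} [Category C] (hC : HasCardinalLT (Arrow C) κ)
    (F : C ⥤ Type*) (hF : ∀ c, HasCardinalLT (F.obj c) κ) :
    HasCardinalLT (Arrow F.Elements) κ := by
  rw [hasCardinalLT_iff_of_equiv (Arrow.equivSigma _)]
  refine (hasCardinalLT_sigma (fun f : Arrow C ↦ F.obj f.left) κ hC fun _ ↦ hF _).of_surjective
    (fun ⟨f, x⟩ ↦ ⟨⟨f.left, x⟩, ⟨f.right, F.map f.hom x⟩, ⟨f.hom, rfl⟩⟩) ?_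
  rintro ⟨⟨c, x⟩, ⟨d, y⟩, ⟨f, hf⟩⟩
  change c ⟶ d at f
  change F.map f x = y at hf
  subst hf
  exact ⟨⟨Arrow.mk f, x⟩, rfl⟩

end

namespace Presheaf

variable {C : Type u} [SmallCategory C] (κ : Cardinal.{u})

def pointwiseHasCardinalLT : ObjectProperty (Cᵒᵖ ⥤ Type u) :=
  fun P ↦ ∀ c, HasCardinalLT (P.obj c) κ

instance : (pointwiseHasCardinalLT (C := C) κ).IsClosedUnderIsomorphisms :=
  ⟨fun e hP c ↦ (hasCardinalLT_iff_of_equiv (e.app c).toEquiv κ).1 (hP c)⟩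

lemma isClosedUnderColimitsOfShape_pointwiseHasCardinalLT [Fact κ.IsRegular]
    (J : Type u) [SmallCategory J] (hJ : HasCardinalLT J κ) :
    (pointwiseHasCardinalLT (C := C) κ).IsClosedUnderColimitsOfShape J :=
  ⟨fun _ ⟨p⟩ c ↦ Types.hasCardinalLT_of_isColimit κ
    (isColimitOfPreserves ((evaluation _ _).obj c) p.isColimit) hJ fun j ↦ p.prop_diag_obj j c⟩

lemma pointwiseHasCardinalLT_uliftYoneda_obj (hC : HasCardinalLT (Arrow C) κ) (X : C) :
    pointwiseHasCardinalLT κ (uliftYoneda.{u} (C := C).obj X) := fun c ↦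
  (hasCardinalLT_ulift_iff _ κ).2 (hC.of_injective _ (Arrow.mk_injective c.unop X))

variable [Fact κ.IsRegular] (hC : HasCardinalLT (Arrow C) κ)
include hC

lemma pointwiseHasCardinalLT_of_isCardinalPresentable (P : Cᵒᵖ ⥤ Type u)
    [IsCardinalPresentable P κ] : pointwiseHasCardinalLT κ P := by
  let G : ObjectProperty (Cᵒᵖ ⥤ Type u) := .ofObj (uliftYoneda.{u} (C := C)).obj
  have hP : G.colimitsCardinalClosure κ P := by
    rw [← IsStrongGenerator.colimitsCardinalClosure_eq_isCardinalPresentable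
      (Functor.isStrongGenerator_of_isDense _)
      (by rintro _ ⟨X⟩; rw [isCardinalPresentable_iff]; infer_instance)]
    assumption
  refine G.colimitsCardinalClosure_le κ (fun J _ hJ ↦ ?_) ?_ P hP
  · exact isClosedUnderColimitsOfShape_pointwiseHasCardinalLT κ J
      (hasCardinalLT_of_hasCardinalLT_arrow hJ)
  · rintro _ ⟨X⟩
    exact pointwiseHasCardinalLT_uliftYoneda_obj κ hC X

lemma isCardinalPresentable_of_pointwiseHasCardinalLT (P : Cᵒᵖ ⥤ Type u)
    (hP : pointwiseHasCardinalLT κ P) : IsCardinalPresentable P κ :=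
  have (k : P.Elementsᵒᵖ) : IsCardinalPresentable ((functorToRepresentables P).obj k) κ := by
    dsimp [functorToRepresentables]
    infer_instance
  isCardinalPresentable_of_isColimit _ (colimitOfRepresentable.{u} P) κ
    ((hasCardinalLT_arrow_op_iff _ κ).2
      (hasCardinalLT_arrow_elements κ ((hasCardinalLT_arrow_op_iff _ κ).2 hC) P hP))

lemma isCardinalPresentable_iff_pointwiseHasCardinalLT (P : Cᵒᵖ ⥤ Type u) :
    IsCardinalPresentable P κ ↔ pointwiseHasCardinalLT κ P :=
  ⟨fun _ ↦ pointwiseHasCardinalLT_of_isCardinalPresentable κ hC P,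
    isCardinalPresentable_of_pointwiseHasCardinalLT κ hC P⟩

end Presheaf

end CategoryTheory

section

variable (κ : Cardinal.{w}) [Fact κ.IsRegular]

lemma isCardFiltered_iff_isCardinalFiltered (J : Type w) [SmallCategory J] :
    IsCardFiltered κ J ↔ IsCardinalFiltered J κ :=
  ⟨fun h ↦ ⟨fun F hA ↦ h _ ((hasCardinalLT_arrow_iff_mk_sigma_lt _ κ).1 hA) F⟩,
    fun _ K _ hK F ↦
      ⟨IsCardinalFiltered.cocone F ((hasCardinalLT_arrow_iff_mk_sigma_lt K κ).2 hK)⟩⟩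

lemma isKappaCompact_iff_isCardinalPresentable {E : Type u} [Category.{v} E] (X : E) :
    IsKappaCompact κ X ↔ IsCardinalPresentable X κ := by
  refine ⟨fun h ↦ ⟨fun J _ hJ ↦ ⟨fun {F} ↦ ⟨fun {c} hc ↦ ?_⟩⟩⟩,
    fun _ J _ hJ F c ⟨hc⟩ ↦ ?_⟩
  · exact h J ((isCardFiltered_iff_isCardinalFiltered κ J).2 hJ) F c ⟨hc⟩
  · have := (isCardFiltered_iff_isCardinalFiltered κ J).1 hJ
    have := preservesColimitsOfShape_of_isCardinalPresentable X κ J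
    exact ⟨isColimitOfPreserves _ hc⟩

end

/-- For a regular cardinal `κ` and a small category `C` with fewer than `κ` morphisms,
a presheaf `P : Cᵒᵖ ⥤ Type u` is `κ`-compact iff each `P(c)` has cardinality `< κ`. -/
theorem presheaf_kappaCompact_iff_pointwise_small
    {C : Type u} [SmallCategory C] (κ : Cardinal.{u}) (hκ : κ.IsRegular)
    (hC : Cardinal.mk (Σ X Y : C, X ⟶ Y) < κ) (P : Cᵒᵖ ⥤ Type u) :
    IsKappaCompact.{u} κ P ↔ ∀ c : C, Cardinal.mk (P.obj (Opposite.op c)) < κ := by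
  have : Fact κ.IsRegular := ⟨hκ⟩
  rw [isKappaCompact_iff_isCardinalPresentable,
    Presheaf.isCardinalPresentable_iff_pointwiseHasCardinalLT κ
      ((hasCardinalLT_arrow_iff_mk_sigma_lt C κ).2 hC)]
  simp only [Presheaf.pointwiseHasCardinalLT, hasCardinalLT_iff_cardinal_mk_lt]
  exact ⟨fun h c ↦ h (op c), fun h c ↦ h c.unop⟩
end

section
/- Let V be a Grothendieck universe in Set, with generic family π : (Σ u ∈ V, u) → V given by the first projection. Then π satisfies realignment: given a monomorphism m : A ↪ B, a map f : Q → B whose fibers are V-small, and a map p : A → V together with a pullback square exhibiting m*Q as the pullback of π along p, there exists q : B → V with q ∘ m = p and a pullback square exhibiting Q as the pullback of π along q extending the given square. -/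
open CategoryTheory

universe u

/-- A Grothendieck universe: a transitive set closed under pairing, power sets, and
unions of families indexed by its elements. -/
structure IsGrothendieckUniverse (V : ZFSet.{u}) : Prop where
  transitive : ∀ x ∈ V, ∀ y ∈ x, y ∈ V
  pair : ∀ x ∈ V, ∀ y ∈ V, ({x, y} : ZFSet.{u}) ∈ V
  powerset : ∀ x ∈ V, ZFSet.powerset x ∈ V
  iUnion : ∀ I ∈ V, ∀ f : ZFSet.{u} → ZFSet.{u}, (∀ i ∈ I, f i ∈ V) →
    ∃ w ∈ V, ∀ x, x ∈ w ↔ ∃ i ∈ I, x ∈ f i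

/-- The type of elements of a universe `V` (codes for `V`-small sets). -/
def UElt (V : ZFSet.{u}) : Type (u + 1) := {x : ZFSet.{u} // x ∈ V}

/-- The decoding of a code `w : UElt V` as a type. -/
def UEl {V : ZFSet.{u}} (w : UElt V) : Type (u + 1) := {y : ZFSet.{u} // y ∈ w.1}

/-- The generic family of `V`: the first projection `(Σ u ∈ V, u) → V`. -/
def genFam (V : ZFSet.{u}) : (Σ w : UElt V, UEl w) → UElt V := Sigma.fst

/-!
In the category of types a commuting square is a pullback exactly when its top map restricts to
bijections between corresponding fibres. A classifying square for `f : Q → B` therefore amounts to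
choosing, for every `b : B`, a code `q b` together with a bijection `f⁻¹(b) ≃ π⁻¹(q b)`. Over the
image of the injection `m` the given square supplies these choices, each point of the image having
a unique preimage; off the image the smallness of the fibres of `f` does.
-/

universe v

namespace CategoryTheory.Limits.Types

variable {X₁ X₂ X₃ X₄ : Type v} {t : X₁ ⟶ X₂} {l : X₁ ⟶ X₃} {r : X₂ ⟶ X₄} {b : X₃ ⟶ X₄}

noncomputable def fiberEquivOfIsPullback (h : IsPullback t l r b) (a : X₃) :
    {x // l x = a} ≃ {y // r y = b a} :=
  Equiv.ofBijective
    (fun x => ⟨t x.1, (ConcreteCategory.congr_hom h.w x.1).trans (congrArg b x.2)⟩) <| by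
    obtain ⟨-, hinj, hsurj⟩ := (isPullback_iff _ _ _ _).mp h
    refine ⟨fun x x' hxx' => ?_, fun y => ?_⟩
    · exact Subtype.ext (hinj _ _ ⟨congrArg Subtype.val hxx', x.2.trans x'.2.symm⟩)
    · obtain ⟨x, htx, hlx⟩ := hsurj y.1 a y.2
      exact ⟨⟨x, hlx⟩, Subtype.ext htx⟩

end CategoryTheory.Limits.Types

open CategoryTheory.Limits.Types

section

variable {Q B E U : Type v} (f : Q → B) (π : E → U) {q : B → U}

lemma fiberEquiv_apply_of_eq (e : ∀ b, {x // f x = b} ≃ {y // π y = q b}) {x : Q} {b : B}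
    (hx : f x = b) : (e (f x) ⟨x, rfl⟩ : E) = e b ⟨x, hx⟩ := by
  subst hx; rfl

lemma isPullback_of_fiberEquiv (e : ∀ b, {x // f x = b} ≃ {y // π y = q b}) :
    IsPullback (TypeCat.ofHom fun x => (e (f x) ⟨x, rfl⟩ : E)) (TypeCat.ofHom f)
      (TypeCat.ofHom π) (TypeCat.ofHom q) := by
  refine (isPullback_iff _ _ _ _).mpr ⟨?_, ?_, ?_⟩
  · ext x
    exact (e (f x) ⟨x, rfl⟩).2
  · rintro x x' ⟨hT, hf⟩
    simp only [TypeCat.ofHom_apply] at hT hf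
    rw [fiberEquiv_apply_of_eq f π e hf.symm] at hT
    exact congrArg Subtype.val ((e (f x)).injective (Subtype.ext hT))
  · intro y b hy
    refine ⟨(e b).symm ⟨y, hy⟩, ?_, ((e b).symm ⟨y, hy⟩).2⟩
    simp only [TypeCat.ofHom_apply]
    rw [fiberEquiv_apply_of_eq f π e ((e b).symm ⟨y, hy⟩).2, Subtype.coe_eta,
      Equiv.apply_symm_apply]

end

def pullbackFstFiberEquiv {A B Q : Type v} (m : A → B) (f : Q → B) (a : A) :
    {z : {x : A × Q // m x.1 = f x.2} // z.1.1 = a} ≃ {x : Q // f x = m a} where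
  toFun z := ⟨z.1.1.2, z.1.2.symm.trans (congrArg m z.2)⟩
  invFun x := ⟨⟨(a, x.1), x.2.symm⟩, rfl⟩
  left_inv := by rintro ⟨⟨⟨a', x⟩, h⟩, rfl⟩; rfl
  right_inv _ := rfl

theorem isPullback_realignment {A B Q E U : Type v} (π : E ⟶ U) (m : A ⟶ B)
    (hm : Function.Injective m) (f : Q ⟶ B)
    (hf : ∀ b : B, ∃ w : U, Nonempty ({x : Q // f x = b} ≃ {y : E // π y = w}))
    (p : A ⟶ U) (t : ({x : A × Q // m x.1 = f x.2} : Type v) ⟶ E)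
    (hsq : IsPullback t
      (TypeCat.ofHom (fun x : {x : A × Q // m x.1 = f x.2} => x.1.1) :
        ({x : A × Q // m x.1 = f x.2} : Type v) ⟶ A) π p) :
    ∃ (q : B ⟶ U) (T : Q ⟶ E), (∀ a : A, q (m a) = p a) ∧
      (∀ x : {x : A × Q // m x.1 = f x.2}, T x.1.2 = t x) ∧ IsPullback T f π q := by
  classical
  let q : B → U := Function.extend m p fun b => (hf b).choose
  have hq : ∀ a, q (m a) = p a := hm.extend_apply _ _
  have hfiber : ∀ b, ∃ e : {x // f x = b} ≃ {y // π y = q b},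
      ∀ (z : {x : A × Q // m x.1 = f x.2}) (hz : f z.1.2 = b),
        (e ⟨z.1.2, hz⟩ : E) = t z := by
    intro b
    by_cases hb : ∃ a, m a = b
    · obtain ⟨a, rfl⟩ := hb
      rw [hq]
      refine ⟨(pullbackFstFiberEquiv m f a).symm.trans (fiberEquivOfIsPullback hsq a),
        fun z hz => ?_⟩
      obtain rfl : z.1.1 = a := hm (z.2.trans hz)
      rfl
    · rw [show q b = (hf b).choose from Function.extend_apply' _ _ _ hb]
      refine ⟨(hf b).choose_spec.some, ?_⟩
      rintro z rfl
      exact absurd ⟨_, z.2⟩ hb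
  choose e he using hfiber
  exact ⟨TypeCat.ofHom q, _, hq, fun z => he _ z rfl, isPullback_of_fiberEquiv f π e⟩

theorem grothendieck_universe_realignment_general
    (V : ZFSet.{u})
    {A B Q : Type (u + 1)} (m : A ⟶ B) (hm : Function.Injective m) (f : Q ⟶ B)
    (hf : ∀ b : B, ∃ w : UElt V, Nonempty ({x : Q // f x = b} ≃ UEl w))
    (p : A ⟶ UElt V)
    (t : ({x : A × Q // m x.1 = f x.2} : Type (u + 1)) ⟶ (Σ w : UElt V, UEl w))
    (hsq : IsPullback t
      (TypeCat.ofHom (fun x : {x : A × Q // m x.1 = f x.2} => x.1.1) :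
        ({x : A × Q // m x.1 = f x.2} : Type (u + 1)) ⟶ A)
      (TypeCat.ofHom (genFam V)) p) :
    ∃ (q : B ⟶ UElt V) (T : Q ⟶ (Σ w : UElt V, UEl w)),
      (∀ a : A, q (m a) = p a) ∧
      (∀ x : {x : A × Q // m x.1 = f x.2}, T x.1.2 = t x) ∧
      IsPullback T f (TypeCat.ofHom (genFam V)) q := by
  refine isPullback_realignment _ m hm f (fun b => ?_) p t hsq
  obtain ⟨w, ⟨e⟩⟩ := hf b
  exact ⟨w, ⟨e.trans (Equiv.sigmaSubtype w).symm⟩⟩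

/-- Realignment for the generic family of a Grothendieck universe `V` in `Set`:
any classifying pullback square for the restriction of a `V`-small map `f : Q → B`
along a monomorphism `m : A ↪ B` extends to a classifying pullback square for `f`. -/
theorem grothendieck_universe_realignment
    (V : ZFSet.{u}) (hV : IsGrothendieckUniverse V)
    {A B Q : Type (u + 1)} (m : A ⟶ B) (hm : Function.Injective m) (f : Q ⟶ B)
    (hf : ∀ b : B, ∃ w : UElt V, Nonempty ({x : Q // f x = b} ≃ UEl w))
    (p : A ⟶ UElt V)
    (t : ({x : A × Q // m x.1 = f x.2} : Type (u + 1)) ⟶ (Σ w : UElt V, UEl w))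
    (hsq : IsPullback t
      (TypeCat.ofHom (fun x : {x : A × Q // m x.1 = f x.2} => x.1.1) :
        ({x : A × Q // m x.1 = f x.2} : Type (u + 1)) ⟶ A)
      (TypeCat.ofHom (genFam V)) p) :
    ∃ (q : B ⟶ UElt V) (T : Q ⟶ (Σ w : UElt V, UEl w)),
      (∀ a : A, q (m a) = p a) ∧
      (∀ x : {x : A × Q // m x.1 = f x.2}, T x.1.2 = t x) ∧
      IsPullback T f (TypeCat.ofHom (genFam V)) q :=
  grothendieck_universe_realignment_general V m hm f hf p t hsq
end

section
/- Let E be a category with pullbacks, S a class of morphisms stable under pullback, and π : E → U a morphism in S satisfying the realignment property for all monomorphisms with respect to S. If E has an initial object that is strict (every morphism into it is an isomorphism), then π is generic for S: every f ∈ S fits into a pullback square over π. -/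
open CategoryTheory CategoryTheory.Limits

universe v u

variable {E : Type u} [Category.{v} E]

/-- Realignment for `(S, π)` along a monomorphism `m : A ⟶ B`: any classifying
pullback square into `π` for the restriction `m*f` of an `f ∈ S` extends along `m`
to a classifying pullback square for `f`. -/
def RealignsAlong (S : MorphismProperty E) {Egen U : E} (π : Egen ⟶ U)
    {A B : E} (m : A ⟶ B) : Prop :=
  ∀ {Q P : E} (f : Q ⟶ B), S f →
    ∀ (fst : P ⟶ Q) (snd : P ⟶ A), IsPullback fst snd f m →
      ∀ (t : P ⟶ Egen) (p : A ⟶ U), IsPullback t snd π p →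
        ∃ (q : B ⟶ U) (T : Q ⟶ Egen),
          m ≫ q = p ∧ fst ≫ T = t ∧ IsPullback T f π q

/-- With strict initial objects, any commuting square with both left corners `⊥` is a
pullback. -/
lemma isPullback_of_initial [HasInitial E] [HasStrictInitialObjects E]
    {X Y : E} (f : X ⟶ Y) (m : ⊥_ E ⟶ Y) (snd : ⊥_ E ⟶ ⊥_ E) :
    IsPullback (initial.to X) snd f m := by
  have w : initial.to X ≫ f = snd ≫ m := initial.hom_ext _ _
  refine ⟨⟨w⟩, ⟨PullbackCone.IsLimit.mk w (fun c => c.snd) ?_ ?_ ?_⟩⟩ <;> intro c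
  · have hinit : IsInitial c.pt :=
      IsInitial.ofIso initialIsInitial (@asIso _ _ _ _ c.snd (initial_isIso_to c.snd)).symm
    exact hinit.hom_ext _ _
  · have hinit : IsInitial c.pt :=
      IsInitial.ofIso initialIsInitial (@asIso _ _ _ _ c.snd (initial_isIso_to c.snd)).symm
    exact hinit.hom_ext _ _
  · intro l _ _
    have hinit : IsInitial c.pt :=
      IsInitial.ofIso initialIsInitial (@asIso _ _ _ _ c.snd (initial_isIso_to c.snd)).symm
    exact hinit.hom_ext _ _

/-- If `π ∈ S` satisfies realignment for all monomorphisms, `S` is stable under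
pullback, and `E` has a strict initial object, then `π` is generic for `S`. -/
theorem generic_of_realignment [HasPullbacks E] [HasInitial E] [HasStrictInitialObjects E]
    (S : MorphismProperty E)
    (hstable : ∀ {P X Y Z : E} (fst : P ⟶ X) (snd : P ⟶ Y) (f : X ⟶ Z) (g : Y ⟶ Z),
      IsPullback fst snd f g → S f → S snd)
    {Egen U : E} (π : Egen ⟶ U) (hπ : S π)
    (hrealign : ∀ {A B : E} (m : A ⟶ B), Mono m → RealignsAlong S π m)
    {X Y : E} (f : X ⟶ Y) (hf : S f) :
    ∃ (t : X ⟶ Egen) (b : Y ⟶ U), IsPullback t f π b := by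
  have hm : Mono (initial.to Y) := initial.mono_from Y _
  have hpb1 : IsPullback (initial.to X) (𝟙 (⊥_ E)) f (initial.to Y) :=
    isPullback_of_initial f _ _
  have hpb2 : IsPullback (initial.to Egen) (𝟙 (⊥_ E)) π (initial.to U) :=
    isPullback_of_initial π _ _
  obtain ⟨q, T, -, -, hT⟩ :=
    hrealign (initial.to Y) hm f hf (initial.to X) (𝟙 _) hpb1 (initial.to Egen)
      (initial.to U) hpb2
  exact ⟨T, q, hT⟩
end

section
/- Let E be a Grothendieck topos (or any category with universal/van Kampen coproducts), and let π : Ẽ → U be a morphism. The class of monomorphisms m along which all realignment problems for π (with respect to a pullback-stable class S containing the relevant pullbacks) can be solved is closed under pushout: if m : A ↪ B admits realignment and m' : C ↪ D is the pushout of m along some map A → C, then m' admits realignment. -/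
open CategoryTheory CategoryTheory.Limits

universe v u

variable {E : Type u} [Category.{v} E]

/-- In a category with adhesive (van Kampen) pushouts along monomorphisms, such as a
Grothendieck topos, the class of monomorphisms along which realignment problems for a
pullback-stable class `(S, π)` can be solved is closed under pushout. -/
theorem realignsAlong_pushout [HasPullbacks E] [HasPushouts E] [Adhesive E]
    (S : MorphismProperty E) [S.IsStableUnderBaseChange]
    {Egen U : E} (π : Egen ⟶ U)
    {A B C D : E} (m : A ⟶ B) [Mono m] (k : A ⟶ C) (m' : C ⟶ D) (k' : B ⟶ D)
    (hpo : IsPushout k m m' k')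
    (hm : RealignsAlong S π m) :
    RealignsAlong S π m' := by
  intro Q P f hf fst snd hP t p ht
  -- the van Kampen property of the pushout square
  have vK : hpo.IsVanKampen := Adhesive.van_kampen' hpo
  -- pull back `f : Q ⟶ D` along `k' : B ⟶ D`
  set QB := pullback f k' with hQBdef
  set d : QB ⟶ Q := pullback.fst f k' with hd
  set gB : QB ⟶ B := pullback.snd f k' with hgBdef
  have hB : IsPullback d gB f k' := IsPullback.of_hasPullback f k'
  have hgB : S gB := MorphismProperty.of_isPullback hB hf
  -- pull back `snd : P ⟶ C` along `k : A ⟶ C`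
  set PA := pullback snd k with hPAdef
  set a : PA ⟶ P := pullback.fst snd k with ha
  set e : PA ⟶ A := pullback.snd snd k with he
  have hPA : IsPullback a e snd k := IsPullback.of_hasPullback snd k
  -- the induced map `PA ⟶ QB`
  have hbw : (a ≫ fst) ≫ f = (e ≫ m) ≫ k' := by
    calc (a ≫ fst) ≫ f = a ≫ fst ≫ f := Category.assoc _ _ _
      _ = a ≫ snd ≫ m' := by rw [hP.w]
      _ = (a ≫ snd) ≫ m' := (Category.assoc _ _ _).symm
      _ = (e ≫ k) ≫ m' := by rw [hPA.w]
      _ = e ≫ k ≫ m' := Category.assoc _ _ _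
      _ = e ≫ m ≫ k' := by rw [hpo.w]
      _ = (e ≫ m) ≫ k' := (Category.assoc _ _ _).symm
  set b : PA ⟶ QB := hB.lift (a ≫ fst) (e ≫ m) hbw with hbdef
  have hb1 : b ≫ d = a ≫ fst := hB.lift_fst _ _ _
  have hb2 : b ≫ gB = e ≫ m := hB.lift_snd _ _ _
  -- the square `(b, e, gB, m)` is a pullback
  have hbig : IsPullback (b ≫ d) e f (m ≫ k') := by
    rw [hb1, ← hpo.w]; exact hPA.paste_horiz hP
  have hbpb : IsPullback b e gB m := IsPullback.of_right hbig hb2 hB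
  -- apply realignment along `m` to the restricted problem
  have htA : IsPullback (a ≫ t) e π (k ≫ p) := hPA.paste_horiz ht
  obtain ⟨qB, TB, hq1, hq2, hTB⟩ := hm gB hgB b e hbpb (a ≫ t) (k ≫ p) htA
  -- the pulled-back square over `Q` is a pushout (van Kampen)
  have hQ : IsPushout a b fst d :=
    (vK a b fst d e snd gB f hPA hbpb ⟨hP.w⟩ ⟨hB.w⟩ ⟨hb1.symm⟩).mpr ⟨hP, hB⟩
  -- glue `q` and `T`
  set q : D ⟶ U := hpo.desc p qB hq1.symm with hqdef
  have hmq : m' ≫ q = p := hpo.inl_desc _ _ _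
  have hkq : k' ≫ q = qB := hpo.inr_desc _ _ _
  set T : Q ⟶ Egen := hQ.desc t TB hq2.symm with hTdef
  have hfT : fst ≫ T = t := hQ.inl_desc _ _ _
  have hdT : d ≫ T = TB := hQ.inr_desc _ _ _
  have wTf : T ≫ π = f ≫ q := by
    apply hQ.hom_ext
    · calc fst ≫ T ≫ π = (fst ≫ T) ≫ π := (Category.assoc _ _ _).symm
        _ = t ≫ π := by rw [hfT]
        _ = snd ≫ p := ht.w
        _ = snd ≫ m' ≫ q := by rw [hmq]
        _ = (snd ≫ m') ≫ q := (Category.assoc _ _ _).symm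
        _ = (fst ≫ f) ≫ q := by rw [hP.w]
        _ = fst ≫ f ≫ q := Category.assoc _ _ _
    · calc d ≫ T ≫ π = (d ≫ T) ≫ π := (Category.assoc _ _ _).symm
        _ = TB ≫ π := by rw [hdT]
        _ = gB ≫ qB := hTB.w
        _ = gB ≫ k' ≫ q := by rw [hkq]
        _ = (gB ≫ k') ≫ q := (Category.assoc _ _ _).symm
        _ = (d ≫ f) ≫ q := by rw [hB.w]
        _ = d ≫ f ≫ q := Category.assoc _ _ _
  refine ⟨q, T, hmq, hfT, ?_⟩
  -- it remains to show the glued square is a pullback; compare with `X = pullback π q`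
  set X := pullback π q with hXdef
  set pf : X ⟶ Egen := pullback.fst π q with hpf
  set ps : X ⟶ D := pullback.snd π q with hps
  have hX : IsPullback pf ps π q := IsPullback.of_hasPullback π q
  set u : Q ⟶ X := hX.lift T f wTf with hudef
  have hu1 : u ≫ pf = T := hX.lift_fst _ _ _
  have hu2 : u ≫ ps = f := hX.lift_snd _ _ _
  -- pull the pushout square back along `ps : X ⟶ D`
  set XC := pullback m' ps with hXCdef
  set fC : XC ⟶ C := pullback.fst m' ps with hfC
  set sC : XC ⟶ X := pullback.snd m' ps with hsC
  have hXC : IsPullback fC sC m' ps := IsPullback.of_hasPullback m' ps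
  set XB := pullback k' ps with hXBdef
  set fB : XB ⟶ B := pullback.fst k' ps with hfB
  set sB : XB ⟶ X := pullback.snd k' ps with hsB
  have hXB : IsPullback fB sB k' ps := IsPullback.of_hasPullback k' ps
  set XA := pullback k fC with hXAdef
  set fA : XA ⟶ A := pullback.fst k fC with hfA
  set sA : XA ⟶ XC := pullback.snd k fC with hsA
  have hXA : IsPullback fA sA k fC := IsPullback.of_hasPullback k fC
  have hbXw : (fA ≫ m) ≫ k' = (sA ≫ sC) ≫ ps := by
    calc (fA ≫ m) ≫ k' = fA ≫ m ≫ k' := Category.assoc _ _ _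
      _ = fA ≫ k ≫ m' := by rw [← hpo.w]
      _ = (fA ≫ k) ≫ m' := (Category.assoc _ _ _).symm
      _ = (sA ≫ fC) ≫ m' := by rw [hXA.w]
      _ = sA ≫ fC ≫ m' := Category.assoc _ _ _
      _ = sA ≫ sC ≫ ps := by rw [hXC.w]
      _ = (sA ≫ sC) ≫ ps := (Category.assoc _ _ _).symm
  set bX : XA ⟶ XB := hXB.lift (fA ≫ m) (sA ≫ sC) hbXw with hbXdef
  have hbX1 : bX ≫ fB = fA ≫ m := hXB.lift_fst _ _ _
  have hbX2 : bX ≫ sB = sA ≫ sC := hXB.lift_snd _ _ _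
  have hbXpb : IsPullback bX fA fB m := by
    refine IsPullback.of_right ?_ hbX1 hXB.flip
    rw [hbX2, ← hpo.w]
    exact (hXA.flip).paste_horiz hXC.flip
  have hXpo : IsPushout sA bX sC sB :=
    (vK sA bX sC sB fA fC fB ps hXA.flip hbXpb ⟨hXC.flip.w⟩ ⟨hXB.flip.w⟩
      ⟨hbX2.symm⟩).mpr ⟨hXC.flip, hXB.flip⟩
  -- comparison maps on the pieces
  have hiCw : (sC ≫ pf) ≫ π = fC ≫ p := by
    calc (sC ≫ pf) ≫ π = sC ≫ pf ≫ π := Category.assoc _ _ _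
      _ = sC ≫ ps ≫ q := by rw [hX.w]
      _ = (sC ≫ ps) ≫ q := (Category.assoc _ _ _).symm
      _ = (fC ≫ m') ≫ q := by rw [← hXC.w]
      _ = fC ≫ m' ≫ q := Category.assoc _ _ _
      _ = fC ≫ p := by rw [hmq]
  set iC : XC ⟶ P := ht.lift (sC ≫ pf) fC hiCw with hiCdef
  have hiC1 : iC ≫ t = sC ≫ pf := ht.lift_fst _ _ _
  have hiC2 : iC ≫ snd = fC := ht.lift_snd _ _ _
  have hiBw : (sB ≫ pf) ≫ π = fB ≫ qB := by
    calc (sB ≫ pf) ≫ π = sB ≫ pf ≫ π := Category.assoc _ _ _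
      _ = sB ≫ ps ≫ q := by rw [hX.w]
      _ = (sB ≫ ps) ≫ q := (Category.assoc _ _ _).symm
      _ = (fB ≫ k') ≫ q := by rw [← hXB.w]
      _ = fB ≫ k' ≫ q := Category.assoc _ _ _
      _ = fB ≫ qB := by rw [hkq]
  set iB : XB ⟶ QB := hTB.lift (sB ≫ pf) fB hiBw with hiBdef
  have hiB1 : iB ≫ TB = sB ≫ pf := hTB.lift_fst _ _ _
  have hiB2 : iB ≫ gB = fB := hTB.lift_snd _ _ _
  have hiAw : (sA ≫ sC ≫ pf) ≫ π = fA ≫ (k ≫ p) := by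
    calc (sA ≫ sC ≫ pf) ≫ π = sA ≫ (sC ≫ pf) ≫ π := by simp only [Category.assoc]
      _ = sA ≫ fC ≫ p := by rw [hiCw]
      _ = (sA ≫ fC) ≫ p := (Category.assoc _ _ _).symm
      _ = (fA ≫ k) ≫ p := by rw [← hXA.w]
      _ = fA ≫ k ≫ p := Category.assoc _ _ _
  set iA : XA ⟶ PA := htA.lift (sA ≫ sC ≫ pf) fA hiAw with hiAdef
  have hiA1 : iA ≫ (a ≫ t) = sA ≫ sC ≫ pf := htA.lift_fst _ _ _
  have hiA2 : iA ≫ e = fA := htA.lift_snd _ _ _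
  have hAC : sA ≫ iC = iA ≫ a := by
    apply ht.hom_ext
    · calc (sA ≫ iC) ≫ t = sA ≫ iC ≫ t := Category.assoc _ _ _
        _ = sA ≫ sC ≫ pf := by rw [hiC1]
        _ = iA ≫ a ≫ t := hiA1.symm
        _ = (iA ≫ a) ≫ t := (Category.assoc _ _ _).symm
    · calc (sA ≫ iC) ≫ snd = sA ≫ iC ≫ snd := Category.assoc _ _ _
        _ = sA ≫ fC := by rw [hiC2]
        _ = (fA ≫ k : XA ⟶ C) := hXA.w.symm
        _ = (iA ≫ e) ≫ k := by rw [hiA2]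
        _ = iA ≫ e ≫ k := Category.assoc _ _ _
        _ = iA ≫ a ≫ snd := by rw [← hPA.w]
        _ = (iA ≫ a) ≫ snd := (Category.assoc _ _ _).symm
  have hAB : bX ≫ iB = iA ≫ b := by
    apply hTB.hom_ext
    · calc (bX ≫ iB) ≫ TB = bX ≫ iB ≫ TB := Category.assoc _ _ _
        _ = bX ≫ sB ≫ pf := by rw [hiB1]
        _ = (bX ≫ sB) ≫ pf := (Category.assoc _ _ _).symm
        _ = (sA ≫ sC) ≫ pf := by rw [hbX2]
        _ = sA ≫ sC ≫ pf := Category.assoc _ _ _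
        _ = iA ≫ a ≫ t := hiA1.symm
        _ = iA ≫ b ≫ TB := by rw [← hq2]
        _ = (iA ≫ b) ≫ TB := (Category.assoc _ _ _).symm
    · calc (bX ≫ iB) ≫ gB = bX ≫ iB ≫ gB := Category.assoc _ _ _
        _ = bX ≫ fB := by rw [hiB2]
        _ = fA ≫ m := hbX1
        _ = (iA ≫ e) ≫ m := by rw [hiA2]
        _ = iA ≫ e ≫ m := Category.assoc _ _ _
        _ = iA ≫ b ≫ gB := by rw [← hb2]
        _ = (iA ≫ b) ≫ gB := (Category.assoc _ _ _).symm
  -- the inverse comparison map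
  have hvw : sA ≫ iC ≫ fst = bX ≫ iB ≫ d := by
    calc sA ≫ iC ≫ fst = (sA ≫ iC) ≫ fst := (Category.assoc _ _ _).symm
      _ = (iA ≫ a) ≫ fst := by rw [hAC]
      _ = iA ≫ a ≫ fst := Category.assoc _ _ _
      _ = iA ≫ b ≫ d := by rw [← hb1]
      _ = (iA ≫ b) ≫ d := (Category.assoc _ _ _).symm
      _ = (bX ≫ iB) ≫ d := by rw [← hAB]
      _ = bX ≫ iB ≫ d := Category.assoc _ _ _
  set v : X ⟶ Q := hXpo.desc (iC ≫ fst) (iB ≫ d) hvw with hvdef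
  have hv1 : sC ≫ v = iC ≫ fst := hXpo.inl_desc _ _ _
  have hv2 : sB ≫ v = iB ≫ d := hXpo.inr_desc _ _ _
  -- `u` and `v` are mutually inverse
  have huv : u ≫ v = 𝟙 Q := by
    apply hQ.hom_ext
    · -- on the `P` component
      have hjw : snd ≫ m' = (fst ≫ u) ≫ ps := by
        rw [Category.assoc, hu2, hP.w]
      set jC : P ⟶ XC := hXC.lift snd (fst ≫ u) hjw with hjCdef
      have hj1 : jC ≫ fC = snd := hXC.lift_fst _ _ _
      have hj2 : jC ≫ sC = fst ≫ u := hXC.lift_snd _ _ _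
      have hji : jC ≫ iC = 𝟙 P := by
        apply ht.hom_ext
        · calc (jC ≫ iC) ≫ t = jC ≫ iC ≫ t := Category.assoc _ _ _
            _ = jC ≫ sC ≫ pf := by rw [hiC1]
            _ = (jC ≫ sC) ≫ pf := (Category.assoc _ _ _).symm
            _ = (fst ≫ u) ≫ pf := by rw [hj2]
            _ = fst ≫ u ≫ pf := Category.assoc _ _ _
            _ = fst ≫ T := by rw [hu1]
            _ = t := hfT
            _ = 𝟙 P ≫ t := (Category.id_comp _).symm
        · calc (jC ≫ iC) ≫ snd = jC ≫ iC ≫ snd := Category.assoc _ _ _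
            _ = jC ≫ fC := by rw [hiC2]
            _ = snd := hj1
            _ = 𝟙 P ≫ snd := (Category.id_comp _).symm
      calc fst ≫ u ≫ v = (fst ≫ u) ≫ v := (Category.assoc _ _ _).symm
        _ = (jC ≫ sC) ≫ v := by rw [← hj2]
        _ = jC ≫ sC ≫ v := Category.assoc _ _ _
        _ = jC ≫ iC ≫ fst := by rw [hv1]
        _ = (jC ≫ iC) ≫ fst := (Category.assoc _ _ _).symm
        _ = 𝟙 P ≫ fst := by rw [hji]
        _ = fst ≫ 𝟙 Q := by rw [Category.id_comp, Category.comp_id]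
    · -- on the `QB` component
      have hjw : gB ≫ k' = (d ≫ u) ≫ ps := by
        rw [Category.assoc, hu2, hB.w]
      set jB : QB ⟶ XB := hXB.lift gB (d ≫ u) hjw with hjBdef
      have hj1 : jB ≫ fB = gB := hXB.lift_fst _ _ _
      have hj2 : jB ≫ sB = d ≫ u := hXB.lift_snd _ _ _
      have hji : jB ≫ iB = 𝟙 QB := by
        apply hTB.hom_ext
        · calc (jB ≫ iB) ≫ TB = jB ≫ iB ≫ TB := Category.assoc _ _ _
            _ = jB ≫ sB ≫ pf := by rw [hiB1]
            _ = (jB ≫ sB) ≫ pf := (Category.assoc _ _ _).symm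
            _ = (d ≫ u) ≫ pf := by rw [hj2]
            _ = d ≫ u ≫ pf := Category.assoc _ _ _
            _ = d ≫ T := by rw [hu1]
            _ = TB := hdT
            _ = 𝟙 QB ≫ TB := (Category.id_comp _).symm
        · calc (jB ≫ iB) ≫ gB = jB ≫ iB ≫ gB := Category.assoc _ _ _
            _ = jB ≫ fB := by rw [hiB2]
            _ = gB := hj1
            _ = 𝟙 QB ≫ gB := (Category.id_comp _).symm
      calc d ≫ u ≫ v = (d ≫ u) ≫ v := (Category.assoc _ _ _).symm
        _ = (jB ≫ sB) ≫ v := by rw [← hj2]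
        _ = jB ≫ sB ≫ v := Category.assoc _ _ _
        _ = jB ≫ iB ≫ d := by rw [hv2]
        _ = (jB ≫ iB) ≫ d := (Category.assoc _ _ _).symm
        _ = 𝟙 QB ≫ d := by rw [hji]
        _ = d ≫ 𝟙 Q := by rw [Category.id_comp, Category.comp_id]
  have hvu : v ≫ u = 𝟙 X := by
    apply hXpo.hom_ext
    · rw [Category.comp_id, ← Category.assoc, hv1, Category.assoc]
      apply hX.hom_ext
      · calc (iC ≫ fst ≫ u) ≫ pf = iC ≫ fst ≫ u ≫ pf := by simp only [Category.assoc]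
          _ = iC ≫ fst ≫ T := by rw [hu1]
          _ = iC ≫ t := by rw [hfT]
          _ = sC ≫ pf := hiC1
      · calc (iC ≫ fst ≫ u) ≫ ps = iC ≫ fst ≫ u ≫ ps := by simp only [Category.assoc]
          _ = iC ≫ fst ≫ f := by rw [hu2]
          _ = iC ≫ snd ≫ m' := by rw [hP.w]
          _ = (iC ≫ snd) ≫ m' := (Category.assoc _ _ _).symm
          _ = fC ≫ m' := by rw [hiC2]
          _ = sC ≫ ps := hXC.w
    · rw [Category.comp_id, ← Category.assoc, hv2, Category.assoc]
      apply hX.hom_ext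
      · calc (iB ≫ d ≫ u) ≫ pf = iB ≫ d ≫ u ≫ pf := by simp only [Category.assoc]
          _ = iB ≫ d ≫ T := by rw [hu1]
          _ = iB ≫ TB := by rw [hdT]
          _ = sB ≫ pf := hiB1
      · calc (iB ≫ d ≫ u) ≫ ps = iB ≫ d ≫ u ≫ ps := by simp only [Category.assoc]
          _ = iB ≫ d ≫ f := by rw [hu2]
          _ = iB ≫ gB ≫ k' := by rw [hB.w]
          _ = (iB ≫ gB) ≫ k' := (Category.assoc _ _ _).symm
          _ = fB ≫ k' := by rw [hiB2]
          _ = sB ≫ ps := hXB.w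
  exact IsPullback.of_iso_pullback ⟨wTf⟩ ⟨u, v, huv, hvu⟩ hu1 hu2
end

section
/- Let E be a category with colimits, π a morphism of E, and S a pullback-stable class of morphisms. The class of monomorphisms realignable for (S, π) is closed under retracts in the arrow category: if j : A ↪ B is realignable and i : C ↪ D is a retract of j in the arrow category of E (via maps whose composites are identities), then i is realignable. -/
open CategoryTheory CategoryTheory.Limits

universe v u

variable {E : Type u} [Category.{v} E]

/-- The class of realignable monomorphisms for a pullback-stable class `(S, π)` is
closed under retracts in the arrow category: if `i : C ⟶ D` is a retract of a
realignable monomorphism `j : A ⟶ B`, then `i` is realignable. -/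
theorem realignsAlong_retract [HasColimits E] [HasPullbacks E]
    (S : MorphismProperty E) [S.IsStableUnderBaseChange]
    {Egen U : E} (π : Egen ⟶ U)
    {A B C D : E} (j : A ⟶ B) [Mono j] (i : C ⟶ D) [Mono i]
    -- a retract of `j` in the arrow category: maps `i ⟶ j ⟶ i` composing to the identity
    (u₁ : C ⟶ A) (u₂ : D ⟶ B) (hu : u₁ ≫ j = i ≫ u₂)
    (v₁ : A ⟶ C) (v₂ : B ⟶ D) (hv : v₁ ≫ i = j ≫ v₂)
    (huv₁ : u₁ ≫ v₁ = 𝟙 C) (huv₂ : u₂ ≫ v₂ = 𝟙 D)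
    (hj : RealignsAlong S π j) :
    RealignsAlong S π i := by
  intro Q P f hf fst snd hpb t p hπ
  -- pull `f` back along `v₂ : B ⟶ D`
  let Q' := pullback f v₂
  let g : Q' ⟶ Q := pullback.fst f v₂
  let f' : Q' ⟶ B := pullback.snd f v₂
  have gsq : IsPullback g f' f v₂ := IsPullback.of_hasPullback f v₂
  have hf' : S f' := S.of_isPullback gsq hf
  -- pull `snd` back along `v₁ : A ⟶ C`
  let P' := pullback snd v₁
  let pfst : P' ⟶ P := pullback.fst snd v₁
  let psnd : P' ⟶ A := pullback.snd snd v₁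
  have psq : IsPullback pfst psnd snd v₁ := IsPullback.of_hasPullback snd v₁
  -- big square: pullback of f along v₁ ≫ i = j ≫ v₂
  have hbig : IsPullback (pfst ≫ fst) psnd f (j ≫ v₂) := by
    rw [← hv]; exact psq.paste_horiz hpb
  -- lift to Q'
  have hcomm : (pfst ≫ fst) ≫ f = (psnd ≫ j) ≫ v₂ := by
    rw [Category.assoc, hpb.w, ← Category.assoc, psq.w, Category.assoc, hv,
      Category.assoc]
  let ℓ : P' ⟶ Q' := gsq.lift (pfst ≫ fst) (psnd ≫ j) hcomm
  have hℓg : ℓ ≫ g = pfst ≫ fst := gsq.lift_fst _ _ _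
  have hℓf' : ℓ ≫ f' = psnd ≫ j := gsq.lift_snd _ _ _
  have hleft : IsPullback ℓ psnd f' j := by
    apply IsPullback.of_right _ hℓf' gsq
    rw [hℓg]; exact hbig
  -- realignment data for the pulled-back problem
  have hπ' : IsPullback (pfst ≫ t) psnd π (v₁ ≫ p) := psq.paste_horiz hπ
  obtain ⟨q', T', hq', hT', hPBq'⟩ :=
    hj f' hf' ℓ psnd hleft (pfst ≫ t) (v₁ ≫ p) hπ'
  -- the section s : Q ⟶ Q'
  have hscomm : 𝟙 Q ≫ f = (f ≫ u₂) ≫ v₂ := by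
    simp [Category.assoc, huv₂]
  let s : Q ⟶ Q' := gsq.lift (𝟙 Q) (f ≫ u₂) hscomm
  have hsg : s ≫ g = 𝟙 Q := gsq.lift_fst _ _ _
  have hsf' : s ≫ f' = f ≫ u₂ := gsq.lift_snd _ _ _
  -- the section μ : P ⟶ P'
  have hμcomm : 𝟙 P ≫ snd = (snd ≫ u₁) ≫ v₁ := by
    simp [Category.assoc, huv₁]
  let μ : P ⟶ P' := psq.lift (𝟙 P) (snd ≫ u₁) hμcomm
  have hμp : μ ≫ pfst = 𝟙 P := psq.lift_fst _ _ _
  have hμs : μ ≫ psnd = snd ≫ u₁ := psq.lift_snd _ _ _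
  -- key identity: fst ≫ s = μ ≫ ℓ
  have hkey : fst ≫ s = μ ≫ ℓ := by
    apply gsq.hom_ext
    · rw [Category.assoc, hsg, Category.comp_id, Category.assoc, hℓg,
        ← Category.assoc, hμp, Category.id_comp]
    · rw [Category.assoc, hsf', Category.assoc, hℓf', ← Category.assoc,
        ← Category.assoc, hμs, hpb.w, Category.assoc, Category.assoc, hu]
  -- the square (s, f, f', u₂) is a pullback
  have hssq : IsPullback s f f' u₂ := by
    apply IsPullback.of_right _ hsf' gsq
    rw [hsg, huv₂]
    exact IsPullback.of_horiz_isIso ⟨by simp⟩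
  refine ⟨u₂ ≫ q', s ≫ T', ?_, ?_, ?_⟩
  · rw [← Category.assoc, ← hu, Category.assoc, hq', ← Category.assoc, huv₁,
      Category.id_comp]
  · rw [← Category.assoc, hkey, Category.assoc, hT', ← Category.assoc, hμp,
      Category.id_comp]
  · exact hssq.paste_horiz hPBq'
end

section
/- Let X be a topos, J ↪ 1 a subterminal object, j : X/J → X the open inclusion with j^* E = E × J → J and right adjoint j_*, and i_* : X_c → X the inclusion of the closed complement (objects E with E × J → J an isomorphism) with left exact left adjoint i^* E = E ⋆ J (the pushout of E ← E × J → J). Then for every object E of X, the square with vertices E, i_* i^* E, j_* j^* E, i_* i^* j_* j^* E formed by the unit maps is a pullback square (local recollement / fracture square). -/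
/-! The join `E ⋆ J` is a pushout along the projection `J × E ⟶ E`, a monomorphism because `J` is
subterminal, so in an adhesive category it is a van Kampen pushout. Map the pushout square of `E`
to that of `J ⟹ E` by the open unit: one back face of this cube is the naturality square of the
projection, and the other has isomorphic vertical sides, since `J × E ⟶ J × (J ⟹ E)` is invertible
(`J × J ≅ J`). Both back faces are therefore pullbacks, the top face is a pushout, and van Kampen
makes the front faces pullbacks; one of them is the fracture square. -/

open CategoryTheory CategoryTheory.Limits CartesianMonoidalCategory MonoidalCategory CartesianClosed

universe v u

noncomputable section

variable {X : Type u} [Category.{v} X] [CartesianMonoidalCategory X] [MonoidalClosed X]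
  [HasPullbacks X] [HasPushouts X] [Adhesive X]

/-- For a subterminal object `J`, the open modality `j_* j^*` is `E ↦ (J ⟹ E)`,
with unit the transpose of the projection `J ⊗ E ⟶ E`. -/
def openUnit (J E : X) : E ⟶ (J ⟹ E) := MonoidalClosed.curry (snd J E)

/-- For a subterminal object `J`, the closed modality `i_* i^*` is the join
`E ⋆ J`, i.e. the pushout of the span `E ← J ⊗ E → J`; its unit is `pushout.inl`. -/
def closedObj (J E : X) : X := pushout (snd J E) (fst J E)

def closedUnit (J E : X) : E ⟶ closedObj J E := pushout.inl _ _

def closedMap (J : X) {E F : X} (φ : E ⟶ F) : closedObj J E ⟶ closedObj J F :=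
  pushout.map _ _ _ _ φ (𝟙 J) (J ◁ φ) (by simp) (by simp)

namespace CategoryTheory

section Cartesian

variable {C : Type*} [Category C] [CartesianMonoidalCategory C] {J : C}

lemma isSubterminal_of_mono_toUnit (hJ : Mono (toUnit J)) : IsSubterminal J :=
  @isSubterminal_of_mono_isTerminal_from _ _ _ _ isTerminalTensorUnit hJ

lemma IsSubterminal.mono_snd (hJ : IsSubterminal J) (A : C) : Mono (snd J A) :=
  ⟨fun _ _ h => CartesianMonoidalCategory.hom_ext _ _ (hJ _ _) h⟩

lemma IsSubterminal.whiskerLeft_snd_eq_snd (hJ : IsSubterminal J) (A : C) :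
    J ◁ snd J A = snd J (J ⊗ A) :=
  CartesianMonoidalCategory.hom_ext _ _ (hJ _ _) (by simp)

lemma isPullback_snd_whiskerLeft (J : C) {A B : C} (f : A ⟶ B) :
    IsPullback (snd J A) (J ◁ f) f (snd J B) := by
  refine IsPullback.of_isLimit (PullbackCone.IsLimit.mk (whiskerLeft_snd J f).symm
    (fun s => lift (s.snd ≫ fst J B) s.fst) (fun s => lift_snd _ _) ?_ ?_)
  · intro s
    ext
    · simp
    · simp [s.condition]
  · intro s m h₁ h₂
    ext
    · simpa using congrArg (· ≫ fst J B) h₂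
    · simpa using h₁

end Cartesian

section Open

variable {C : Type*} [Category C] [CartesianMonoidalCategory C] [MonoidalClosed C] {J : C}

lemma IsSubterminal.ev_comp_openUnit (hJ : IsSubterminal J) (E : C) :
    (ihom.ev J).app E ≫ openUnit J E = snd J (J ⟹ E) := by
  apply MonoidalClosed.uncurry_injective
  simp [MonoidalClosed.uncurry_eq, openUnit, hJ.whiskerLeft_snd_eq_snd]

lemma IsSubterminal.isIso_whiskerLeft_openUnit (hJ : IsSubterminal J) (E : C) :
    IsIso (J ◁ openUnit J E) :=
  ⟨lift (fst J _) ((ihom.ev J).app E), by ext <;> simp [openUnit],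
    by rw [lift_whiskerLeft, hJ.ev_comp_openUnit, lift_fst_snd]⟩

end Open

section Closed

variable {C : Type*} [Category C] [CartesianMonoidalCategory C] [HasPushouts C] [Adhesive C]
  {J : C}

lemma IsSubterminal.isPullback_closedUnit_of_isIso_whiskerLeft (hJ : IsSubterminal J)
    {A B : C} (φ : A ⟶ B) [IsIso (J ◁ φ)] :
    IsPullback (closedUnit J A) φ (closedMap J φ) (closedUnit J B) := by
  have := hJ.mono_snd B
  have vanKampen := Adhesive.van_kampen (IsPushout.of_hasPushout (snd J B) (fst J B))
  have frontFaces := (vanKampen _ _ _ _ (J ◁ φ) φ (𝟙 J) (closedMap J φ)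
    (isPullback_snd_whiskerLeft J φ) (IsPullback.of_vert_isIso ⟨by simp⟩)
    ⟨pushout.inl_desc _ _ _⟩ ⟨pushout.inr_desc _ _ _⟩ ⟨pushout.condition⟩).mp
    (IsPushout.of_hasPushout _ _)
  exact frontFaces.1

end Closed

end CategoryTheory

/-- Local recollement (fracture square): in a topos, for any subterminal object `J`
and any object `E`, the square formed by the units of the open modality
`E ↦ j_* j^* E = (J ⟹ E)` and the closed modality `E ↦ i_* i^* E = E ⋆ J`
is a pullback:
`E → i_* i^* E`, `E → j_* j^* E`, `i_* i^* E → i_* i^* j_* j^* E`,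
`j_* j^* E → i_* i^* j_* j^* E`. -/
theorem fracture_square (J : X) (hJ : Mono (toUnit J)) (E : X) :
    IsPullback (closedUnit J E) (openUnit J E)
      (closedMap J (openUnit J E)) (closedUnit J (J ⟹ E)) := by
  replace hJ : IsSubterminal J := isSubterminal_of_mono_toUnit hJ
  have := hJ.isIso_whiskerLeft_openUnit E
  exact hJ.isPullback_closedUnit_of_isIso_whiskerLeft (openUnit J E)

end
end

section
/- Let F, G : D → E be diagrams in a Grothendieck topos such that G satisfies descent (for every cartesian transformation into G, the colimit insertion squares are pullbacks), and let α : F ⟹ G be a cartesian natural transformation each of whose components is a monomorphism. Then the induced map colim F → colim G is a monomorphism. -/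
open CategoryTheory CategoryTheory.Limits Opposite

universe w u v

/-!
Sections of a colimit of sheaves of types are locally in the image of one of the colimit
insertions: the colimit is the sheafification of the pointwise colimit of presheaves, and
sheafification is locally surjective. If `colimMap α` identifies two sections `x` and `y`,
write `y` locally as `ι_F d u`; then `(α u, x)` is a point of the descent pullback square over
`colim G`, so some `w` has `α w = α u` and `ι_F d w = x`. As `α` is mono, `w = u`, hence `x` and `y`
agree locally: `colimMap α` is locally injective, so it is a monomorphism.
-/

lemma CategoryTheory.Limits.Types.snd_eq_of_isPullback_of_injective {X₁ X₂ X₃ X₄ : Type w}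
    {t : X₁ ⟶ X₂} {l : X₁ ⟶ X₃} {r : X₂ ⟶ X₄} {b : X₃ ⟶ X₄} (h : IsPullback t l r b)
    (ht : Function.Injective t) {x₁ : X₁} {x₃ : X₃} (hx : r (t x₁) = b x₃) : l x₁ = x₃ := by
  obtain ⟨y, hy, rfl⟩ := exists_of_isPullback h _ _ hx
  rw [ht hy]

namespace CategoryTheory.Sheaf

variable {C : Type u} [Category.{v} C] {J : GrothendieckTopology C}

lemma injective_hom_app_of_mono {F G : Sheaf J (Type w)} (φ : F ⟶ G) [Mono φ] (U : Cᵒᵖ) :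
    Function.Injective (φ.hom.app U) :=
  (mono_iff_injective _).1
    (inferInstanceAs (Mono ((sheafToPresheaf J _ ⋙ (evaluation _ _).obj U).map φ)))

lemma isPullback_hom_app {P X Y Z : Sheaf J (Type w)} {fst : P ⟶ X} {snd : P ⟶ Y} {f : X ⟶ Z}
    {g : Y ⟶ Z} (h : IsPullback fst snd f g) (U : Cᵒᵖ) :
    IsPullback (fst.hom.app U) (snd.hom.app U) (f.hom.app U) (g.hom.app U) :=
  h.map (sheafToPresheaf J _ ⋙ (evaluation _ _).obj U)

variable [HasWeakSheafify J (Type (max u v))] {D : Type*} [Category D]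

lemma isLocallySurjective_colimitDesc_mapCocone {F : D ⥤ Sheaf J (Type (max u v))}
    [HasColimit (F ⋙ sheafToPresheaf J _)] {c : Cocone F} (hc : IsColimit c) :
    Presheaf.IsLocallySurjective J (colimit.desc _ ((sheafToPresheaf J _).mapCocone c)) := by
  let E := colimit.cocone (F ⋙ sheafToPresheaf J (Type (max u v)))
  let hE := isColimitSheafifyCocone E (colimit.isColimit _)
  let e : sheafify J E.pt ≅ c.pt.obj :=
    (sheafToPresheaf J _).mapIso (hE.coconePointUniqueUpToIso hc)
  have hfac : colimit.desc _ ((sheafToPresheaf J _).mapCocone c) = toSheafify J E.pt ≫ e.hom := by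
    refine colimit.hom_ext fun d => ?_
    rw [colimit.ι_desc]
    show (c.ι.app d).hom = _
    rw [← hE.comp_coconePointUniqueUpToIso_hom hc d, ObjectProperty.FullSubcategory.comp_hom,
      sheafifyCocone_ι_app_val]
    exact Category.assoc _ _ _
  have := Presheaf.isLocallySurjective_toSheafify' J E.pt
  rw [hfac]
  infer_instance

lemma exists_covering_ι_app_eq_map {F : D ⥤ Sheaf J (Type (max u v))}
    [HasColimit (F ⋙ sheafToPresheaf J _)] {c : Cocone F} (hc : IsColimit c) {X : C}
    (s : c.pt.obj.obj (op X)) :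
    ∃ S ∈ J X, ∀ ⦃Y : C⦄ (f : Y ⟶ X), S f →
      ∃ d u, (c.ι.app d).hom.app (op Y) u = c.pt.obj.map f.op s := by
  have := isLocallySurjective_colimitDesc_mapCocone hc
  refine ⟨_, Presheaf.imageSieve_mem J (colimit.desc _ ((sheafToPresheaf J _).mapCocone c)) s,
    fun Y f ⟨z, hz⟩ => ?_⟩
  obtain ⟨d, u, rfl⟩ := Types.jointly_surjective_of_isColimit
    (isColimitOfPreserves ((evaluation _ _).obj (op Y)) (colimit.isColimit _)) z
  have hι := congr_app (colimit.ι_desc ((sheafToPresheaf J _).mapCocone c) d) (op Y)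
  exact ⟨d, u, (ConcreteCategory.congr_hom hι u).symm.trans hz⟩

lemma mono_of_isPullback_ι_of_mono_app {F G : D ⥤ Sheaf J (Type (max u v))}
    [HasColimit (F ⋙ sheafToPresheaf J _)] {c : Cocone F} (hc : IsColimit c) (c' : Cocone G)
    (α : F ⟶ G) [∀ d, Mono (α.app d)] (φ : c.pt ⟶ c'.pt)
    (hsq : ∀ d, IsPullback (α.app d) (c.ι.app d) (c'.ι.app d) φ) : Mono φ := by
  have : IsLocallyInjective φ := ⟨fun {X} x y hxy => ?_⟩
  · exact mono_of_isLocallyInjective φ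
  obtain ⟨S, hS, hy⟩ := exists_covering_ι_app_eq_map hc y
  refine J.superset_covering (fun Y f hf => ?_) hS
  obtain ⟨d, u, hu⟩ := hy f hf
  show c.pt.obj.map f.op x = c.pt.obj.map f.op y
  rw [← hu]
  refine (Types.snd_eq_of_isPullback_of_injective (isPullback_hom_app (hsq d) (op Y))
    (injective_hom_app_of_mono (α.app d) (op Y)) ?_).symm
  calc (c'.ι.app d).hom.app _ ((α.app d).hom.app _ u)
      = φ.hom.app _ ((c.ι.app d).hom.app _ u) :=
        ConcreteCategory.congr_hom (congr_app (congrArg (·.hom) (hsq d).w) (op Y)) u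
    _ = c'.pt.obj.map f.op (φ.hom.app X y) := by rw [hu, NatTrans.naturality_apply]
    _ = φ.hom.app _ (c.pt.obj.map f.op x) := by rw [← hxy, NatTrans.naturality_apply]

end CategoryTheory.Sheaf

/-- In a Grothendieck topos, if `G` satisfies descent and `α : F ⟶ G` is a cartesian
natural transformation whose components are monomorphisms, then the induced map
`colim F ⟶ colim G` is a monomorphism. -/
theorem mono_colimMap_of_cartesian_mono_of_descent
    {C : Type u} [SmallCategory C] (J : GrothendieckTopology C)
    [HasWeakSheafify J (Type u)] [HasColimits (Sheaf J (Type u))]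
    {D : Type u} [SmallCategory D]
    (F G : D ⥤ Sheaf J (Type u))
    -- `G` satisfies descent: for any cartesian transformation `β : K ⟶ G`,
    -- the colimit-insertion squares are pullbacks
    (hdescent : ∀ (K : D ⥤ Sheaf J (Type u)) (β : K ⟶ G),
      (∀ {d e : D} (f : d ⟶ e), IsPullback (β.app d) (K.map f) (G.map f) (β.app e)) →
      ∀ d : D, IsPullback (β.app d) (colimit.ι K d) (colimit.ι G d) (colimMap β))
    (α : F ⟶ G)
    (hcart : ∀ {d e : D} (f : d ⟶ e),
      IsPullback (α.app d) (F.map f) (G.map f) (α.app e))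
    (hmono : ∀ d : D, Mono (α.app d)) :
    Mono (colimMap α) :=
  Sheaf.mono_of_isPullback_ι_of_mono_app (colimit.isColimit F) (colimit.cocone G) α (colimMap α)
    (hdescent F α hcart)
end
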